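/- Let μ be a σ-finite measure on 𝒳 and let 𝒮 be a finite set of probability densities with respect to μ such that the associated probability measures {P_t = t·μ, t ∈ 𝒮} are pairwise distinct, and such that for all s, t, u ∈ 𝒮 with t ≠ u one has P_s^{⊗n}[∏_{i=1}^n t(X_i) = ∏_{i=1}^n u(X_i)] = 0. Then for every s ∈ 𝒮 and every n, P_s^{⊗n}[∃ t ∈ 𝒮, t ≠ s, with ∏_{i=1}^n t(X_i) ≥ ∏_{i=1}^n s(X_i)] ≤ Σ_{t ∈ 𝒮, t ≠ s} ρ(P_s,P_t)^n; consequently, the maximum-likelihood estimator t̂ₙ = argmax_{t∈𝒮} ∏_{i=1}^n t(X_i) (which is a.s. well defined and unique) satisfies sup_{s∈𝒮} P_s^{⊗n}[t̂ₙ ≠ s] → 0 as n → ∞. -/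

import Mathlib

open MeasureTheory ENNReal Filter Classical
open scoped NNReal

/-! On the event `∏ s(xᵢ) ≤ ∏ t(xᵢ)` the likelihood `∏ s(xᵢ)`, which is the density of
`P_s^{⊗n}` with respect to `μ^{⊗n}`, is at most `∏ √(s t)(xᵢ)`, whose `μ^{⊗n}`-integral is
`ρ(P_s, P_t)^n` by Fubini; a union bound over `t ≠ s` gives the first claim. A maximum-likelihood
estimator can miss `s` only on that event, and `ρ(P_s, P_t) < 1` because `√(s t) < (s + t) / 2`
wherever `s ≠ t`, so the bound is a finite sum of geometric sequences tending to `0`. -/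

namespace ENNReal

theorem coe_rpow_half_mul (a b : ℝ≥0) :
    ((a : ℝ≥0∞) * b) ^ (1/2 : ℝ) = (NNReal.sqrt (a * b) : ℝ≥0∞) := by
  rw [NNReal.sqrt_eq_rpow, ← coe_mul, coe_rpow_of_nonneg _ (by norm_num)]

theorem coe_add_div_two (a b : ℝ≥0) : ((a : ℝ≥0∞) + b) / 2 = ((a + b) / 2 : ℝ≥0) := by
  rw [coe_div two_ne_zero, coe_add]; rfl

theorem rpow_half_mul_le_add_div_two (a b : ℝ≥0∞) : (a * b) ^ (1/2 : ℝ) ≤ (a + b) / 2 := by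
  rcases eq_or_ne a ∞ with rfl | ha
  · rcases eq_or_ne b 0 with rfl | hb
    · simp [zero_rpow_of_pos]
    · simp [top_div_of_ne_top]
  rcases eq_or_ne b ∞ with rfl | hb
  · rcases eq_or_ne a 0 with rfl | ha0
    · simp [zero_rpow_of_pos]
    · simp [top_div_of_ne_top]
  lift a to ℝ≥0 using ha
  lift b to ℝ≥0 using hb
  rw [coe_rpow_half_mul, coe_add_div_two]
  exact coe_le_coe.2 (NNReal.sqrt_mul_le_half_add a b)

theorem rpow_half_mul_lt_add_div_two {a b : ℝ≥0∞} (ha : a ≠ ∞) (hb : b ≠ ∞) (hab : a ≠ b) :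
    (a * b) ^ (1/2 : ℝ) < (a + b) / 2 := by
  lift a to ℝ≥0 using ha
  lift b to ℝ≥0 using hb
  rw [coe_rpow_half_mul, coe_add_div_two]
  exact coe_lt_coe.2 (NNReal.sqrt_mul_lt_half_add_of_ne (mod_cast hab))

theorem le_rpow_half_mul_of_le {a b : ℝ≥0∞} (hab : a ≤ b) : a ≤ (a * b) ^ (1/2 : ℝ) :=
  calc a = (a * a) ^ (1/2 : ℝ) := by
        rw [← sq, ← rpow_natCast, ← rpow_mul]; norm_num
    _ ≤ (a * b) ^ (1/2 : ℝ) := by gcongr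

end ENNReal

namespace MeasureTheory

theorem lintegral_fin_nat_prod_eq_prod {n : ℕ} {E : Fin n → Type*}
    {mE : ∀ i, MeasurableSpace (E i)} {μ : (i : Fin n) → Measure (E i)} [∀ i, SigmaFinite (μ i)]
    {f : (i : Fin n) → E i → ℝ≥0∞} (hf : ∀ i, Measurable (f i)) :
    ∫⁻ x, ∏ i, f i (x i) ∂(Measure.pi μ) = ∏ i, ∫⁻ x, f i x ∂(μ i) := by
  induction n with
  | zero => simp
  | succ n ih =>
      calc
        _ = ∫⁻ x : E 0 × ((i : Fin n) → E (Fin.succ i)),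
            f 0 x.1 * ∏ i : Fin n, f (Fin.succ i) (x.2 i)
            ∂((μ 0).prod (Measure.pi (fun i ↦ μ i.succ))) := by
          refine Eq.trans ?_ ((measurePreserving_piFinSuccAbove μ 0).lintegral_comp_emb
            (MeasurableEquiv.measurableEmbedding _) _)
          refine lintegral_congr fun x => ?_
          rw [Fin.prod_univ_succ]
          rfl
        _ = (∫⁻ x, f 0 x ∂μ 0) * ∏ i : Fin n, ∫⁻ x, f (Fin.succ i) x ∂(μ i.succ) := by
          rw [← ih fun i => hf i.succ, ← lintegral_prod_mul (hf 0).aemeasurable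
            (Finset.measurable_prod _ fun i _ =>
              (hf i.succ).comp (measurable_pi_apply i)).aemeasurable]
        _ = ∏ i, ∫⁻ x, f i x ∂(μ i) := by rw [Fin.prod_univ_succ]

theorem lintegral_fintype_prod_eq_prod {ι : Type*} [Fintype ι] {E : ι → Type*}
    {mE : ∀ i, MeasurableSpace (E i)} {μ : (i : ι) → Measure (E i)} [∀ i, SigmaFinite (μ i)]
    {f : (i : ι) → E i → ℝ≥0∞} (hf : ∀ i, Measurable (f i)) :
    ∫⁻ x, ∏ i, f i (x i) ∂(Measure.pi μ) = ∏ i, ∫⁻ x, f i x ∂(μ i) := by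
  let e := (Fintype.equivFin ι).symm
  rw [← (measurePreserving_piCongrLeft _ e).lintegral_comp_emb
    (MeasurableEquiv.measurableEmbedding _)]
  simp_rw [← e.prod_comp, MeasurableEquiv.coe_piCongrLeft, Equiv.piCongrLeft_apply_apply]
  exact lintegral_fin_nat_prod_eq_prod fun i => hf (e i)

theorem Measure.pi_withDensity {ι : Type*} [Fintype ι] {E : ι → Type*}
    {mE : ∀ i, MeasurableSpace (E i)} {μ : (i : ι) → Measure (E i)} [∀ i, SigmaFinite (μ i)]
    {f : (i : ι) → E i → ℝ≥0∞} (hf : ∀ i, Measurable (f i))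
    [∀ i, SigmaFinite ((μ i).withDensity (f i))] :
    Measure.pi (fun i => (μ i).withDensity (f i)) =
      (Measure.pi μ).withDensity fun x => ∏ i, f i (x i) := by
  refine Measure.pi_eq fun A hA => ?_
  rw [withDensity_apply _ (MeasurableSet.univ_pi hA), Measure.restrict_pi_pi,
    lintegral_fintype_prod_eq_prod hf]
  simp only [withDensity_apply _ (hA _)]

end MeasureTheory

noncomputable def hellingerAffinity {𝒳 : Type*} [MeasurableSpace 𝒳] (μ : Measure 𝒳)
    (s t : 𝒳 → ℝ≥0∞) : ℝ≥0∞ :=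
  ∫⁻ x, (s x * t x) ^ (1/2 : ℝ) ∂μ

section Hellinger

variable {𝒳 : Type*} [MeasurableSpace 𝒳] {μ : Measure 𝒳} {s t : 𝒳 → ℝ≥0∞}

theorem lintegral_add_div_two_of_lintegral_eq_one (hs : Measurable s)
    (hs₁ : ∫⁻ x, s x ∂μ = 1) (ht₁ : ∫⁻ x, t x ∂μ = 1) :
    ∫⁻ x, (s x + t x) / 2 ∂μ = 1 := by
  simp_rw [div_eq_mul_inv]
  rw [lintegral_mul_const' _ _ (by norm_num), lintegral_add_left hs, hs₁, ht₁, one_add_one_eq_two,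
    ENNReal.mul_inv_cancel two_ne_zero ofNat_ne_top]

theorem hellingerAffinity_le_one (hs : Measurable s)
    (hs₁ : ∫⁻ x, s x ∂μ = 1) (ht₁ : ∫⁻ x, t x ∂μ = 1) : hellingerAffinity μ s t ≤ 1 :=
  lintegral_add_div_two_of_lintegral_eq_one hs hs₁ ht₁ ▸
    lintegral_mono fun x => ENNReal.rpow_half_mul_le_add_div_two (s x) (t x)

theorem hellingerAffinity_lt_one (hs : Measurable s) (ht : Measurable t)
    (hs₁ : ∫⁻ x, s x ∂μ = 1) (ht₁ : ∫⁻ x, t x ∂μ = 1)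
    (hne : μ.withDensity s ≠ μ.withDensity t) : hellingerAffinity μ s t < 1 := by
  have hle : ∀ x, (s x * t x) ^ (1/2 : ℝ) ≤ (s x + t x) / 2 :=
    fun x => ENNReal.rpow_half_mul_le_add_div_two (s x) (t x)
  have hne_ae : ∃ᵐ x ∂μ, (s x * t x) ^ (1/2 : ℝ) ≠ (s x + t x) / 2 := by
    intro h_eq
    refine hne (withDensity_congr_ae ?_)
    filter_upwards [h_eq, ae_lt_top hs (by simp [hs₁]), ae_lt_top ht (by simp [ht₁])]
      with x hx hsx htx
    by_contra hst
    exact (ENNReal.rpow_half_mul_lt_add_div_two hsx.ne htx.ne hst).ne (not_not.1 hx)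
  calc hellingerAffinity μ s t < ∫⁻ x, (s x + t x) / 2 ∂μ :=
        lintegral_strict_mono_of_ae_le_of_frequently_ae_lt ((hs.add ht).div_const 2).aemeasurable
          (ne_top_of_le_ne_top one_ne_top (hellingerAffinity_le_one hs hs₁ ht₁))
          (ae_of_all _ hle) hne_ae
    _ = 1 := lintegral_add_div_two_of_lintegral_eq_one hs hs₁ ht₁

theorem pi_withDensity_setOf_prod_le_le_hellingerAffinity_pow [SigmaFinite μ]
    {ι : Type*} [Fintype ι] (hs : Measurable s) (ht : Measurable t)
    [SigmaFinite (μ.withDensity s)] :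
    Measure.pi (fun _ : ι => μ.withDensity s) {x | ∏ i, s (x i) ≤ ∏ i, t (x i)} ≤
      hellingerAffinity μ s t ^ Fintype.card ι := by
  have hprod : ∀ {f : 𝒳 → ℝ≥0∞}, Measurable f → Measurable fun x : ι → 𝒳 => ∏ i, f (x i) :=
    fun hf => Finset.measurable_prod _ fun i _ => hf.comp (measurable_pi_apply i)
  have hst : Measurable fun x => (s x * t x) ^ (1/2 : ℝ) := (hs.mul ht).pow_const _
  rw [Measure.pi_withDensity fun _ => hs,
    withDensity_apply _ (measurableSet_le (hprod hs) (hprod ht))]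
  calc ∫⁻ x in {x | ∏ i, s (x i) ≤ ∏ i, t (x i)}, ∏ i, s (x i) ∂(Measure.pi fun _ : ι => μ)
      ≤ ∫⁻ x in {x | ∏ i, s (x i) ≤ ∏ i, t (x i)}, ∏ i, (s (x i) * t (x i)) ^ (1/2 : ℝ)
          ∂(Measure.pi fun _ : ι => μ) := by
        refine setLIntegral_mono (hprod hst) fun x hx => ?_
        rw [ENNReal.prod_rpow_of_nonneg (by norm_num), Finset.prod_mul_distrib]
        exact ENNReal.le_rpow_half_mul_of_le hx
    _ ≤ ∫⁻ x, ∏ i, (s (x i) * t (x i)) ^ (1/2 : ℝ) ∂(Measure.pi fun _ : ι => μ) :=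
        setLIntegral_le_lintegral _ _
    _ = hellingerAffinity μ s t ^ Fintype.card ι := by
        rw [lintegral_fintype_prod_eq_prod fun _ => hst, Finset.prod_const, Finset.card_univ]
        rfl

theorem pi_withDensity_exists_prod_le_le_sum_hellingerAffinity_pow [SigmaFinite μ]
    {ι : Type*} [Fintype ι] {𝒮 : Finset (𝒳 → ℝ≥0∞)} (h𝒮 : ∀ t ∈ 𝒮, Measurable t)
    (hs : Measurable s) [SigmaFinite (μ.withDensity s)] :
    Measure.pi (fun _ : ι => μ.withDensity s)
        {x | ∃ t ∈ 𝒮, t ≠ s ∧ ∏ i, s (x i) ≤ ∏ i, t (x i)} ≤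
      ∑ t ∈ 𝒮.erase s, hellingerAffinity μ s t ^ Fintype.card ι :=
  calc _ ≤ Measure.pi (fun _ : ι => μ.withDensity s)
          (⋃ t ∈ 𝒮.erase s, {x | ∏ i, s (x i) ≤ ∏ i, t (x i)}) :=
        measure_mono <| by
          rintro x ⟨t, ht, hts, hle⟩
          exact Set.mem_biUnion (Finset.mem_erase.2 ⟨hts, ht⟩) hle
    _ ≤ _ := measure_biUnion_finset_le _ _
    _ ≤ _ := Finset.sum_le_sum fun t ht =>
        pi_withDensity_setOf_prod_le_le_hellingerAffinity_pow hs
          (h𝒮 t (Finset.mem_of_mem_erase ht))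

end Hellinger

theorem mle_consistent_on_finite_model_general
    {𝒳 : Type*} [MeasurableSpace 𝒳] (μ : Measure 𝒳) [SigmaFinite μ]
    (𝒮 : Finset (𝒳 → ℝ≥0∞))
    (hmeas : ∀ s ∈ 𝒮, Measurable s)
    (hdens : ∀ s ∈ 𝒮, ∫⁻ x, s x ∂μ = 1)
    (hdist : ∀ s ∈ 𝒮, ∀ t ∈ 𝒮, s ≠ t → μ.withDensity s ≠ μ.withDensity t) :
    (∀ s ∈ 𝒮, ∀ n : ℕ,
      (Measure.pi fun _ : Fin n => μ.withDensity s)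
          {x | ∃ t ∈ 𝒮, t ≠ s ∧ ∏ i, s (x i) ≤ ∏ i, t (x i)} ≤
        ∑ t ∈ 𝒮.erase s, (∫⁻ x, (s x * t x) ^ (1/2 : ℝ) ∂μ) ^ n) ∧
    ∀ that : (n : ℕ) → (Fin n → 𝒳) → (𝒳 → ℝ≥0∞),
      (∀ n x, that n x ∈ 𝒮 ∧ ∀ u ∈ 𝒮, ∏ i, u (x i) ≤ ∏ i, (that n x) (x i)) →
      Tendsto (fun n : ℕ => ⨆ s ∈ 𝒮,
          (Measure.pi fun _ : Fin n => μ.withDensity s) {x | that n x ≠ s})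
        atTop (nhds 0) := by
  have hlikelier : ∀ s ∈ 𝒮, ∀ n : ℕ,
      (Measure.pi fun _ : Fin n => μ.withDensity s)
          {x | ∃ t ∈ 𝒮, t ≠ s ∧ ∏ i, s (x i) ≤ ∏ i, t (x i)} ≤
        ∑ t ∈ 𝒮.erase s, hellingerAffinity μ s t ^ n := fun s hs n => by
    have := isFiniteMeasure_withDensity (μ := μ) (f := s) (by simp [hdens s hs])
    simpa only [Fintype.card_fin] using pi_withDensity_exists_prod_le_le_sum_hellingerAffinity_pow
      (μ := μ) (ι := Fin n) hmeas (hmeas s hs)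
  refine ⟨hlikelier, fun that hthat => ?_⟩
  have hρ : Tendsto (fun n => ∑ s ∈ 𝒮, ∑ t ∈ 𝒮.erase s, hellingerAffinity μ s t ^ n)
      atTop (nhds 0) := by
    simpa using tendsto_finsetSum _ fun s hs => tendsto_finsetSum _ fun t ht =>
      ENNReal.tendsto_pow_atTop_nhds_zero_of_lt_one <| hellingerAffinity_lt_one (hmeas s hs)
        (hmeas t (Finset.mem_of_mem_erase ht)) (hdens s hs) (hdens t (Finset.mem_of_mem_erase ht))
        (hdist s hs t (Finset.mem_of_mem_erase ht) (Finset.ne_of_mem_erase ht).symm)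
  refine tendsto_of_tendsto_of_tendsto_of_le_of_le tendsto_const_nhds hρ (fun n => zero_le)
    fun n => iSup₂_le fun s hs => ?_
  calc _ ≤ (Measure.pi fun _ : Fin n => μ.withDensity s)
        {x | ∃ t ∈ 𝒮, t ≠ s ∧ ∏ i, s (x i) ≤ ∏ i, t (x i)} :=
        measure_mono fun x hx => ⟨that n x, (hthat n x).1, hx, (hthat n x).2 s hs⟩
    _ ≤ _ := hlikelier s hs n
    _ ≤ _ := Finset.single_le_sum (f := fun s => ∑ t ∈ 𝒮.erase s, hellingerAffinity μ s t ^ n)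
        (fun _ _ => zero_le) hs

/-- For a finite identifiable model `𝒮` of densities w.r.t. `μ` with a.s. no
likelihood ties, the probability (under `P_s^{⊗n}`) that some `t ≠ s` is at least as likely
as `s` is bounded by `∑_{t ≠ s} ρ(P_s,P_t)^n`; consequently any maximum-likelihood estimator
`t̂ₙ` satisfies `sup_{s ∈ 𝒮} P_s^{⊗n}[t̂ₙ ≠ s] → 0` as `n → ∞`. -/
theorem mle_consistent_on_finite_model
    {𝒳 : Type*} [MeasurableSpace 𝒳] (μ : Measure 𝒳) [SigmaFinite μ]
    (𝒮 : Finset (𝒳 → ℝ≥0∞))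
    (hmeas : ∀ s ∈ 𝒮, Measurable s)
    (hdens : ∀ s ∈ 𝒮, ∫⁻ x, s x ∂μ = 1)
    (hdist : ∀ s ∈ 𝒮, ∀ t ∈ 𝒮, s ≠ t → μ.withDensity s ≠ μ.withDensity t)
    (hties : ∀ s ∈ 𝒮, ∀ t ∈ 𝒮, ∀ u ∈ 𝒮, t ≠ u → ∀ n : ℕ, 1 ≤ n →
      (Measure.pi fun _ : Fin n => μ.withDensity s)
        {x | ∏ i, t (x i) = ∏ i, u (x i)} = 0) :
    (∀ s ∈ 𝒮, ∀ n : ℕ,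
      (Measure.pi fun _ : Fin n => μ.withDensity s)
          {x | ∃ t ∈ 𝒮, t ≠ s ∧ ∏ i, s (x i) ≤ ∏ i, t (x i)} ≤
        ∑ t ∈ 𝒮.erase s, (∫⁻ x, (s x * t x) ^ (1/2 : ℝ) ∂μ) ^ n) ∧
    ∀ that : (n : ℕ) → (Fin n → 𝒳) → (𝒳 → ℝ≥0∞),
      (∀ n x, that n x ∈ 𝒮 ∧ ∀ u ∈ 𝒮, ∏ i, u (x i) ≤ ∏ i, (that n x) (x i)) →
      Tendsto (fun n : ℕ => ⨆ s ∈ 𝒮,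
          (Measure.pi fun _ : Fin n => μ.withDensity s) {x | that n x ≠ s})
        atTop (nhds 0) :=
  mle_consistent_on_finite_model_general μ 𝒮 hmeas hdens hdist
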